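/- arXiv:1803.08947 — 2 statements merged into one kernel-verified Lean document; each statement's English description precedes it below -/
import Mathlib

section
/- In the Theorem 2 setting, the continuation-value term Σ_y V(T(π,y))σ(π,y) of the Bellman equation, for any bounded function V that depends on a belief π' only through (π'(0), π'(N+1)), itself depends on π only through (π(0), π(N+1)); consequently, the Bellman operator preserves the class of functions of the belief that factor through (π(0), π(N+1)). -/
open Finset

/-- States {0, 1, ..., N+1}. -/
inductive St (N : ℕ) : Type
  | lo : St N
  | mid : Fin N → St N
  | hi : St N
  deriving DecidableEq, Fintype

/-- Normalizing constant σ(π,y) = Σⱼ B_j(y)·(P₂ᵀπ)(j). -/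
noncomputable def bSigma {N : ℕ} {Y : Type*} (B : St N → Y → ℝ)
    (P2 : St N → St N → ℝ) (π : St N → ℝ) (y : Y) : ℝ :=
  ∑ j, B j y * (∑ i, π i * P2 i j)

/-- Bayes belief update T(π,y)(j) = B_j(y)·(P₂ᵀπ)(j) / σ(π,y). -/
noncomputable def bayesT {N : ℕ} {Y : Type*} (B : St N → Y → ℝ)
    (P2 : St N → St N → ℝ) (π : St N → ℝ) (y : Y) : St N → ℝ :=
  fun j => B j y * (∑ i, π i * P2 i j) / bSigma B P2 π y

lemma sum_st {N : ℕ} (f : St N → ℝ) :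
    ∑ i, f i = f St.lo + f St.hi + ∑ k, f (St.mid k) := by
  let e : St N ≃ (Bool ⊕ Fin N) :=
    { toFun := fun s => match s with
        | St.lo => Sum.inl false
        | St.hi => Sum.inl true
        | St.mid k => Sum.inr k
      invFun := fun s => match s with
        | Sum.inl false => St.lo
        | Sum.inl true => St.hi
        | Sum.inr k => St.mid k
      left_inv := by rintro (_|_|_) <;> rfl
      right_inv := by rintro ((_|_)|_) <;> rfl }
  rw [Fintype.sum_equiv e f (fun s => f (e.symm s)) (fun x => by simp)]
  rw [Fintype.sum_sum_type, Fintype.sum_bool]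
  show f St.hi + f St.lo + _ = _
  ring_nf
  rfl

/-- Theorem 2 setting: for any bounded V depending on a belief only through
(π(0), π(N+1)), the continuation-value term Σ_y V(T(π,y))σ(π,y) — and hence the Bellman
image min{c_f(1−π(0)−π(N+1)), c_d(π(0)+π(N+1)) + Σ_y V(T(π,y))σ(π,y)} — also depends on
the belief only through (π(0), π(N+1)). -/
theorem stmt18 {N : ℕ} {Y : Type*} [Fintype Y]
    (p : St N → ℝ) (hpnn : ∀ j, 0 ≤ p j) (hpsum : ∑ j, p j = 1)
    (P2 : St N → St N → ℝ)
    (hrowLo : ∀ j, P2 St.lo j = if j = St.lo then 1 else 0)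
    (hrowHi : ∀ j, P2 St.hi j = if j = St.hi then 1 else 0)
    (hrowMid : ∀ i j, P2 (St.mid i) j = p j)
    (B : St N → Y → ℝ) (hB : ∀ j y, 0 < B j y)
    (Bbar : Y → ℝ) (hBmid : ∀ (i : Fin N) (y : Y), B (St.mid i) y = Bbar y)
    (cf cd : ℝ)
    (V : (St N → ℝ) → ℝ)
    (hVbdd : ∃ M, ∀ ρ : St N → ℝ, |V ρ| ≤ M)
    (hVfac : ∀ ρ ρ' : St N → ℝ, ρ St.lo = ρ' St.lo → ρ St.hi = ρ' St.hi → V ρ = V ρ')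
    (π πt : St N → ℝ)
    (hπ : π ∈ stdSimplex ℝ (St N)) (hπt : πt ∈ stdSimplex ℝ (St N))
    (hlo : π St.lo = πt St.lo) (hhi : π St.hi = πt St.hi) :
    (∑ y, V (bayesT B P2 π y) * bSigma B P2 π y)
      = (∑ y, V (bayesT B P2 πt y) * bSigma B P2 πt y) ∧
    min (cf * (1 - π St.lo - π St.hi))
        (cd * (π St.lo + π St.hi) + ∑ y, V (bayesT B P2 π y) * bSigma B P2 π y)
      = min (cf * (1 - πt St.lo - πt St.hi))
        (cd * (πt St.lo + πt St.hi) + ∑ y, V (bayesT B P2 πt y) * bSigma B P2 πt y) := by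
  have key : ∀ j, (∑ i, π i * P2 i j) = (∑ i, πt i * P2 i j) := by
    intro j
    have hm : ∑ k, π (St.mid k) = ∑ k, πt (St.mid k) := by
      have h1 := hπ.2; have h2 := hπt.2
      rw [sum_st π] at h1; rw [sum_st πt] at h2
      linarith
    rw [sum_st (fun i => π i * P2 i j), sum_st (fun i => πt i * P2 i j)]
    simp only [hrowMid, ← Finset.sum_mul]
    rw [hlo, hhi, hm]
  have hσ : ∀ y, bSigma B P2 π y = bSigma B P2 πt y := by
    intro y; unfold bSigma
    exact Finset.sum_congr rfl (fun j _ => by rw [key j])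
  have hT : ∀ y, bayesT B P2 π y = bayesT B P2 πt y := by
    intro y; funext j; unfold bayesT; rw [key j, hσ y]
  have hsum : (∑ y, V (bayesT B P2 π y) * bSigma B P2 π y)
      = (∑ y, V (bayesT B P2 πt y) * bSigma B P2 πt y) :=
    Finset.sum_congr rfl (fun y _ => by rw [hT y, hσ y])
  refine ⟨hsum, ?_⟩
  rw [hlo, hhi, hsum]
end

section
/- In the Theorem 3 setting, if V is a bounded function of the belief depending only on q = π(0)+π(N+1), then the Bellman image LV(π) = min{ c_f(1−q), c_d·q + Σ_y V(T(π,y))σ(π,y) } also depends only on q; hence by value iteration from V_0 ≡ 0, the optimal value function of the POMDP is a function of the scalar q alone. -/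
open Finset

/-- Bellman operator LV(π) = min{ c_f(1−q), c_d q + Σ_y V(T(π,y))σ(π,y) }, q = π(0)+π(N+1). -/
noncomputable def bellmanOp {N : ℕ} {Y : Type*} [Fintype Y] (B : St N → Y → ℝ)
    (P2 : St N → St N → ℝ) (cf cd : ℝ) (V : (St N → ℝ) → ℝ) (π : St N → ℝ) : ℝ :=
  min (cf * (1 - (π St.lo + π St.hi)))
    (cd * (π St.lo + π St.hi) + ∑ y, V (bayesT B P2 π y) * bSigma B P2 π y)

def stE (N : ℕ) : St N ≃ (Fin N) ⊕ Bool where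
  toFun := fun s => match s with
    | .lo => .inr false
    | .hi => .inr true
    | .mid i => .inl i
  invFun := fun s => match s with
    | .inr false => .lo
    | .inr true => .hi
    | .inl i => .mid i
  left_inv := fun s => by cases s <;> rfl
  right_inv := fun s => by rcases s with i | b
                           · rfl
                           · cases b <;> rfl

lemma sum_St {N : ℕ} (f : St N → ℝ) :
    ∑ i, f i = f St.lo + f St.hi + ∑ i : Fin N, f (St.mid i) := by
  rw [← Equiv.sum_comp (stE N).symm f, Fintype.sum_sum_type, Fintype.sum_bool]
  simp only [stE, Equiv.coe_fn_symm_mk]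
  ring

lemma trans_eq {N : ℕ} (p : St N → ℝ) (P2 : St N → St N → ℝ)
    (hrowLo : ∀ j, P2 St.lo j = if j = St.lo then 1/2 else if j = St.hi then 1/2 else 0)
    (hrowHi : ∀ j, P2 St.hi j = if j = St.lo then 1/2 else if j = St.hi then 1/2 else 0)
    (hrowMid : ∀ i j, P2 (St.mid i) j = p j)
    (π : St N → ℝ) (hsum : ∑ i, π i = 1) (j : St N) :
    ∑ i, π i * P2 i j = (π St.lo + π St.hi) * P2 St.lo j
      + (1 - (π St.lo + π St.hi)) * p j := by
  have h1 : ∑ i : Fin N, π (St.mid i) = 1 - (π St.lo + π St.hi) := by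
    have h := sum_St π
    linarith
  have hHi : P2 St.hi j = P2 St.lo j := by rw [hrowLo, hrowHi]
  rw [sum_St (fun i => π i * P2 i j)]
  simp only [hrowMid, hHi]
  rw [← Finset.sum_mul, h1]
  ring

/-- Theorem 3 setting: if V depends on the belief only through q = π(0)+π(N+1), then so
does its Bellman image LV; hence, by value iteration from V₀ ≡ 0, the optimal value
function of the POMDP is a function of the scalar q alone. -/
theorem stmt19 {N : ℕ} {Y : Type*} [Fintype Y]
    (p : St N → ℝ) (hpnn : ∀ j, 0 ≤ p j) (hpsum : ∑ j, p j = 1)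
    (hp0 : p St.lo = p St.hi)
    (P2 : St N → St N → ℝ)
    (hrowLo : ∀ j, P2 St.lo j = if j = St.lo then 1/2 else if j = St.hi then 1/2 else 0)
    (hrowHi : ∀ j, P2 St.hi j = if j = St.lo then 1/2 else if j = St.hi then 1/2 else 0)
    (hrowMid : ∀ i j, P2 (St.mid i) j = p j)
    (B : St N → Y → ℝ) (hB : ∀ j y, 0 < B j y)
    (hB0 : ∀ y, B St.lo y = B St.hi y)
    (Bbar : Y → ℝ) (hBmid : ∀ (i : Fin N) (y : Y), B (St.mid i) y = Bbar y)
    (cf cd : ℝ) :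
    (∀ V : (St N → ℝ) → ℝ,
      (∃ M, ∀ ρ : St N → ℝ, |V ρ| ≤ M) →
      (∀ ρ ρ' : St N → ℝ, ρ St.lo + ρ St.hi = ρ' St.lo + ρ' St.hi → V ρ = V ρ') →
      ∀ π ∈ stdSimplex ℝ (St N), ∀ πt ∈ stdSimplex ℝ (St N),
        π St.lo + π St.hi = πt St.lo + πt St.hi →
        bellmanOp B P2 cf cd V π = bellmanOp B P2 cf cd V πt) ∧
    (∀ (Vseq : ℕ → (St N → ℝ) → ℝ) (Vlim : (St N → ℝ) → ℝ),
      (∀ π, Vseq 0 π = 0) →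
      (∀ n π, Vseq (n + 1) π = bellmanOp B P2 cf cd (Vseq n) π) →
      (∀ π ∈ stdSimplex ℝ (St N),
        Filter.Tendsto (fun n => Vseq n π) Filter.atTop (nhds (Vlim π))) →
      ∀ π ∈ stdSimplex ℝ (St N), ∀ πt ∈ stdSimplex ℝ (St N),
        π St.lo + π St.hi = πt St.lo + πt St.hi →
        Vlim π = Vlim πt) := by
  have key : ∀ π ∈ stdSimplex ℝ (St N), ∀ πt ∈ stdSimplex ℝ (St N),
      π St.lo + π St.hi = πt St.lo + πt St.hi →
      ∀ V : (St N → ℝ) → ℝ, bellmanOp B P2 cf cd V π = bellmanOp B P2 cf cd V πt := by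
    intro π hπ πt hπt hq V
    have htr : ∀ j, ∑ i, π i * P2 i j = ∑ i, πt i * P2 i j := by
      intro j
      rw [trans_eq p P2 hrowLo hrowHi hrowMid π hπ.2 j,
        trans_eq p P2 hrowLo hrowHi hrowMid πt hπt.2 j, hq]
    have hσ : ∀ y, bSigma B P2 π y = bSigma B P2 πt y := by
      intro y
      unfold bSigma
      exact Finset.sum_congr rfl fun j _ => by rw [htr j]
    have hT : ∀ y, bayesT B P2 π y = bayesT B P2 πt y := by
      intro y
      funext j
      unfold bayesT
      rw [htr j, hσ y]
    unfold bellmanOp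
    rw [hq]
    congr 2
    exact Finset.sum_congr rfl fun y _ => by rw [hT y, hσ y]
  constructor
  · intro V _ _ π hπ πt hπt hq
    exact key π hπ πt hπt hq V
  · intro Vseq Vlim h0 hstep hlim π hπ πt hπt hq
    have hn : ∀ n, Vseq n π = Vseq n πt := by
      intro n
      cases n with
      | zero => rw [h0, h0]
      | succ m => rw [hstep, hstep]; exact key π hπ πt hπt hq (Vseq m)
    have h1 := hlim π hπ
    have h2 := hlim πt hπt
    have h1' : Filter.Tendsto (fun n => Vseq n πt) Filter.atTop (nhds (Vlim π)) := by
      simpa only [hn] using h1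
    exact tendsto_nhds_unique h1' h2
end
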